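/- arXiv:1909.10345 — 6 statements merged into one kernel-verified Lean document; each statement's English description precedes it below -/
import Mathlib

section
/- If w lies in the image of the unit circle under the Laurent polynomial p(z) = Σ_{k=-m}^n a_k z^k (with a_{-m} a_n ≠ 0), then the polynomials g(z) = z^m (p(z) - w) and g*(z) = z^n · conj(p(1/conj(z)) - w) (where the conjugate is applied to the coefficients) have a common complex root, and hence their resultant vanishes at w. -/
/-! On the unit circle `conj z = z⁻¹`, so `g(z) = z^m (p(z) - w)` and
`g*(z) = z^n conj(p(z) - w)`; any `z ∈ 𝕋` with `p(z) = w` is therefore a common root. -/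

open Finset

theorem pow_toNat_eq_zpow {G : Type*} [DivInvMonoid G] (z : G) {k : ℤ} (hk : 0 ≤ k) :
    z ^ k.toNat = z ^ k := by
  rw [← zpow_natCast, Int.toNat_of_nonneg hk]

theorem sum_mul_pow_eq_sum_pow_toNat {K : Type*} [DivisionRing K] (a : ℤ → K) (m n : ℕ) {z : K}
    (hz : z ≠ 0) :
    (∑ k ∈ Icc (-(m : ℤ)) n, a k * z ^ k) * z ^ m =
      ∑ k ∈ Icc (-(m : ℤ)) n, a k * z ^ (k + m).toNat := by
  rw [sum_mul]
  refine sum_congr rfl fun k hk => ?_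
  rw [pow_toNat_eq_zpow z (by linarith [(mem_Icc.mp hk).1]), zpow_add₀ hz, zpow_natCast, mul_assoc]

theorem conj_sum_mul_pow_eq_sum_pow_toNat (a : ℤ → ℂ) (m n : ℕ) {z : ℂ} (hz : ‖z‖ = 1) :
    starRingEnd ℂ (∑ k ∈ Icc (-(m : ℤ)) n, a k * z ^ k) * z ^ n =
      ∑ k ∈ Icc (-(m : ℤ)) n, starRingEnd ℂ (a k) * z ^ ((n : ℤ) - k).toNat := by
  have hz0 : z ≠ 0 := norm_ne_zero_iff.mp (hz ▸ one_ne_zero)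
  rw [map_sum, sum_mul]
  refine sum_congr rfl fun k hk => ?_
  rw [pow_toNat_eq_zpow z (by linarith [(mem_Icc.mp hk).2]), map_mul, map_zpow₀,
    ← Complex.inv_eq_conj hz, sub_eq_neg_add, zpow_add₀ hz0, zpow_neg, inv_zpow, zpow_natCast,
    mul_assoc]

theorem stmt_0_general (m n : ℕ) (a : ℤ → ℂ) (w : ℂ)
    (hw : ∃ z : ℂ, ‖z‖ = 1 ∧
      (∑ k ∈ Finset.Icc (-(m : ℤ)) (n : ℤ), a k * z ^ k) = w) :
    ∃ z : ℂ,
      ((∑ k ∈ Finset.Icc (-(m : ℤ)) (n : ℤ), a k * z ^ (k + (m : ℤ)).toNat)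
          - w * z ^ m = 0) ∧
      ((∑ k ∈ Finset.Icc (-(m : ℤ)) (n : ℤ), (starRingEnd ℂ) (a k) * z ^ ((n : ℤ) - k).toNat)
          - (starRingEnd ℂ) w * z ^ n = 0) := by
  obtain ⟨z, hz, hpw⟩ := hw
  have hz0 : z ≠ 0 := norm_ne_zero_iff.mp (hz ▸ one_ne_zero)
  refine ⟨z, ?_, ?_⟩
  · rw [← sum_mul_pow_eq_sum_pow_toNat a m n hz0, hpw, sub_self]
  · rw [← conj_sum_mul_pow_eq_sum_pow_toNat a m n hz, hpw, sub_self]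

/-- If `w` lies in the image of the unit circle under the Laurent polynomial
`p(z) = ∑_{k=-m}^n a_k z^k` with `a_{-m} a_n ≠ 0`, then the polynomials
`g(z) = z^m (p(z) - w)` and `g*(z) = z^n conj(p(1/conj z) - w)` have a common root. -/
theorem stmt_0 (m n : ℕ) (hn : 1 ≤ n) (a : ℤ → ℂ)
    (ha : a (-(m : ℤ)) * a (n : ℤ) ≠ 0) (w : ℂ)
    (hw : ∃ z : ℂ, ‖z‖ = 1 ∧
      (∑ k ∈ Finset.Icc (-(m : ℤ)) (n : ℤ), a k * z ^ k) = w) :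
    ∃ z : ℂ,
      ((∑ k ∈ Finset.Icc (-(m : ℤ)) (n : ℤ), a k * z ^ (k + (m : ℤ)).toNat)
          - w * z ^ m = 0) ∧
      ((∑ k ∈ Finset.Icc (-(m : ℤ)) (n : ℤ), (starRingEnd ℂ) (a k) * z ^ ((n : ℤ) - k).toNat)
          - (starRingEnd ℂ) w * z ^ n = 0) :=
  stmt_0_general m n a w hw
end

section
/- The image of the unit circle under a Laurent polynomial p is contained in the zero set of a nonzero real polynomial in two real variables; namely there exists a nonzero h ∈ ℝ[x,y] such that for every z with |z| = 1, h(Re p(z), Im p(z)) = 0. -/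
/-!
On the unit circle `conj z = z⁻¹`, so `Re p` and `Im p` are restrictions of Laurent polynomials
of degree at most `N = m + n`, and `(Re p)^i (Im p)^j` with `i, j ≤ d` is one of degree at most
`2dN`. These live in a complex space of dimension `4dN + 1`, i.e. of real dimension `8dN + 2`,
which is smaller than the number `(d + 1)²` of such monomials once `d = 8N + 1`. A real linear
relation between them is the required polynomial.
-/

open Finset MvPolynomial Module

theorem LinearMap.exists_ne_zero_map_eq_zero_of_finrank_lt {K M A ι : Type*} [Field K]
    [AddCommGroup M] [Module K M] [AddCommGroup A] [Module K A] [Fintype ι] (L : M →ₗ[K] A)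
    {q : ι → M} (hq : LinearIndependent K q) (V : Submodule K A) [FiniteDimensional K V]
    (hV : ∀ i, L (q i) ∈ V) (hcard : finrank K V < Fintype.card ι) :
    ∃ h, h ≠ 0 ∧ L h = 0 := by
  have hdep : ¬LinearIndependent K (L ∘ q) := fun hind => by
    have := Submodule.finrank_mono (s := Submodule.span K (Set.range (L ∘ q)))
      (Submodule.span_le.mpr (Set.range_subset_iff.mpr hV))
    rw [finrank_span_eq_card hind] at this
    omega
  obtain ⟨c, hc, i, hi⟩ := Fintype.not_linearIndependent_iff.mp hdep
  exact ⟨∑ i, c i • q i, fun h0 => hi (Fintype.linearIndependent_iff.mp hq c h0 i),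
    by simpa using hc⟩

theorem MvPolynomial.aeval_ofReal_apply {X σ : Type*} (u : σ → X → ℝ)
    (h : MvPolynomial σ ℝ) (x : X) :
    aeval (fun i y => (u i y : ℂ)) h x = eval (fun i => u i x) h := by
  change Pi.evalAlgHom ℝ (fun _ => ℂ) x (aeval (fun i y => (u i y : ℂ)) h) = _
  rw [← AlgHom.comp_apply, comp_aeval]
  exact aeval_algebraMap_apply ℂ (fun i => u i x) h

def laurentOnCircle (K : ℕ) : Submodule ℂ (Circle → ℂ) :=
  Submodule.span ℂ (Set.range fun k : Icc (-K : ℤ) K => fun z : Circle => (z : ℂ) ^ (k : ℤ))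

section laurentOnCircle

variable {K L : ℕ} {f g : Circle → ℂ}

theorem zpow_mem_laurentOnCircle {k : ℤ} (hk : k ∈ Icc (-K : ℤ) K) :
    (fun z : Circle => (z : ℂ) ^ k) ∈ laurentOnCircle K :=
  Submodule.subset_span ⟨⟨k, hk⟩, rfl⟩

theorem laurentOnCircle_mono (hKL : K ≤ L) : laurentOnCircle K ≤ laurentOnCircle L := by
  refine Submodule.span_le.mpr <|
    Set.range_subset_iff.mpr fun ⟨k, hk⟩ => zpow_mem_laurentOnCircle ?_
  simp only [mem_Icc] at hk ⊢
  omega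

theorem laurentOnCircle_mul_le :
    laurentOnCircle K * laurentOnCircle L ≤ laurentOnCircle (K + L) := by
  rw [laurentOnCircle, laurentOnCircle, Submodule.span_mul_span]
  refine Submodule.span_le.mpr ?_
  rintro _ ⟨_, ⟨⟨k, hk⟩, rfl⟩, _, ⟨⟨l, hl⟩, rfl⟩, rfl⟩
  have hkl : k + l ∈ Icc (-(K + L : ℕ) : ℤ) (K + L : ℕ) := by
    simp only [mem_Icc] at hk hl ⊢
    omega
  have hprod : (fun z : Circle => (z : ℂ) ^ k) * (fun z : Circle => (z : ℂ) ^ l) =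
      fun z : Circle => (z : ℂ) ^ (k + l) :=
    funext fun z => (zpow_add₀ (Circle.coe_ne_zero z) k l).symm
  change _ * _ ∈ (laurentOnCircle (K + L) : Set (Circle → ℂ))
  rw [hprod]
  exact zpow_mem_laurentOnCircle hkl

theorem mul_mem_laurentOnCircle (hf : f ∈ laurentOnCircle K) (hg : g ∈ laurentOnCircle L) :
    f * g ∈ laurentOnCircle (K + L) :=
  laurentOnCircle_mul_le (Submodule.mul_mem_mul hf hg)

theorem pow_mem_laurentOnCircle (hf : f ∈ laurentOnCircle K) (i : ℕ) :
    f ^ i ∈ laurentOnCircle (i * K) := by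
  induction i with
  | zero =>
    rw [pow_zero, zero_mul]
    convert zpow_mem_laurentOnCircle (K := 0) (k := 0) (by simp) using 1
    funext z
    simp
  | succ i ih => simpa [pow_succ, Nat.succ_mul] using mul_mem_laurentOnCircle ih hf

theorem star_mem_laurentOnCircle (hf : f ∈ laurentOnCircle K) : star f ∈ laurentOnCircle K := by
  induction hf using Submodule.span_induction with
  | mem _ hg =>
    obtain ⟨⟨k, hk⟩, rfl⟩ := hg
    have hk' : -k ∈ Icc (-K : ℤ) K := by
      simp only [mem_Icc] at hk ⊢
      omega
    convert zpow_mem_laurentOnCircle hk' using 1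
    funext z
    simp [← Circle.coe_inv_eq_conj, zpow_neg]
  | zero => simp
  | add f g _ _ hf hg => simpa using add_mem hf hg
  | smul c f _ hf => simpa [star_smul] using Submodule.smul_mem _ (star c) hf

theorem re_mem_laurentOnCircle (hf : f ∈ laurentOnCircle K) :
    (fun z => ((f z).re : ℂ)) ∈ laurentOnCircle K := by
  convert Submodule.smul_mem _ (2⁻¹ : ℂ) (add_mem hf (star_mem_laurentOnCircle hf)) using 1
  funext z
  simp [Complex.re_eq_add_conj, div_eq_inv_mul]

theorem im_mem_laurentOnCircle (hf : f ∈ laurentOnCircle K) :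
    (fun z => ((f z).im : ℂ)) ∈ laurentOnCircle K := by
  convert Submodule.smul_mem _ (2 * Complex.I)⁻¹ (sub_mem hf (star_mem_laurentOnCircle hf))
    using 1
  funext z
  simp [Complex.im_eq_sub_conj, div_eq_inv_mul]

instance : FiniteDimensional ℂ (laurentOnCircle K) :=
  FiniteDimensional.span_of_finite ℂ (Set.finite_range _)

instance : FiniteDimensional ℝ ((laurentOnCircle K).restrictScalars ℝ) :=
  show FiniteDimensional ℝ (laurentOnCircle K) from Module.Finite.trans ℂ _

theorem finrank_restrictScalars_laurentOnCircle_le :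
    finrank ℝ ((laurentOnCircle K).restrictScalars ℝ) ≤ 2 * (2 * K + 1) := by
  change finrank ℝ (laurentOnCircle K) ≤ _
  rw [← Module.finrank_mul_finrank ℝ ℂ, Complex.finrank_real_complex]
  have := finrank_range_le_card (R := ℂ)
    fun k : Icc (-K : ℤ) K => fun z : Circle => (z : ℂ) ^ (k : ℤ)
  simp only [Set.finrank, Fintype.card_coe, Int.card_Icc] at this
  rw [laurentOnCircle]
  omega

end laurentOnCircle

theorem exists_ne_zero_aeval_eq_zero_of_mem_laurentOnCircle {N : ℕ} {x : Fin 2 → Circle → ℂ}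
    (hx : ∀ i, x i ∈ laurentOnCircle N) :
    ∃ h : MvPolynomial (Fin 2) ℝ, h ≠ 0 ∧ aeval x h = 0 := by
  set d := 8 * N + 1 with hd
  let e : Fin (d + 1) × Fin (d + 1) → Fin 2 →₀ ℕ := fun t =>
    Finsupp.single 0 (t.1 : ℕ) + Finsupp.single 1 (t.2 : ℕ)
  have he : Function.Injective e := by
    intro s t hst
    have h0 := DFunLike.congr_fun hst 0
    have h1 := DFunLike.congr_fun hst 1
    simp [e] at h0 h1
    exact Prod.ext (Fin.ext h0) (Fin.ext h1)
  have hmem : ∀ t, aeval x (monomial (e t) (1 : ℝ)) ∈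
      (laurentOnCircle (2 * d * N)).restrictScalars ℝ := by
    rintro ⟨i, j⟩
    have hij : i * N + j * N ≤ 2 * d * N := by
      have := i.is_le; have := j.is_le
      nlinarith
    have hprod := mul_mem_laurentOnCircle (pow_mem_laurentOnCircle (hx 0) i)
      (pow_mem_laurentOnCircle (hx 1) j)
    simpa [e, aeval_monomial, Finsupp.prod_add_index, pow_add]
      using laurentOnCircle_mono hij hprod
  refine (aeval x).toLinearMap.exists_ne_zero_map_eq_zero_of_finrank_lt
    ((basisMonomials _ ℝ).linearIndependent.comp e he)
    ((laurentOnCircle (2 * d * N)).restrictScalars ℝ) (by simpa using hmem) ?_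
  rw [Fintype.card_prod, Fintype.card_fin]
  exact finrank_restrictScalars_laurentOnCircle_le.trans_lt (by rw [hd]; nlinarith)

theorem sum_zpow_mem_laurentOnCircle (m n : ℕ) (a : ℤ → ℂ) :
    (fun z : Circle => ∑ k ∈ Icc (-(m : ℤ)) n, a k * (z : ℂ) ^ k) ∈
      laurentOnCircle (m + n) := by
  have hsum : (fun z : Circle => ∑ k ∈ Icc (-(m : ℤ)) n, a k * (z : ℂ) ^ k) =
      ∑ k ∈ Icc (-(m : ℤ)) n, a k • fun z : Circle => (z : ℂ) ^ k := by
    funext z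
    simp
  rw [hsum]
  refine Submodule.sum_mem _ fun k hk => Submodule.smul_mem _ _ (zpow_mem_laurentOnCircle ?_)
  simp only [mem_Icc] at hk ⊢
  omega

theorem exists_ne_zero_eval_re_im_eq_zero {N : ℕ} {f : Circle → ℂ}
    (hf : f ∈ laurentOnCircle N) :
    ∃ h : MvPolynomial (Fin 2) ℝ, h ≠ 0 ∧ ∀ z, eval ![(f z).re, (f z).im] h = 0 := by
  obtain ⟨h, h0, hh⟩ := exists_ne_zero_aeval_eq_zero_of_mem_laurentOnCircle
    (x := fun i z => ((![(f z).re, (f z).im] i : ℝ) : ℂ))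
    (Fin.forall_fin_two.mpr ⟨re_mem_laurentOnCircle hf, im_mem_laurentOnCircle hf⟩)
  refine ⟨h, h0, fun z => ?_⟩
  have hz : (eval (fun i => ![(f z).re, (f z).im] i) h : ℂ) = 0 :=
    (aeval_ofReal_apply (fun i z => ![(f z).re, (f z).im] i) h z).symm.trans (congrFun hh z)
  exact_mod_cast hz

theorem stmt_2_general (m n : ℕ) (a : ℤ → ℂ) :
    ∃ h : MvPolynomial (Fin 2) ℝ, h ≠ 0 ∧
      ∀ z : ℂ, ‖z‖ = 1 →
        MvPolynomial.eval
          ![(∑ k ∈ Finset.Icc (-(m : ℤ)) (n : ℤ), a k * z ^ k).re,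
            (∑ k ∈ Finset.Icc (-(m : ℤ)) (n : ℤ), a k * z ^ k).im] h = 0 := by
  obtain ⟨h, h0, hh⟩ := exists_ne_zero_eval_re_im_eq_zero (sum_zpow_mem_laurentOnCircle m n a)
  exact ⟨h, h0, fun z hz => hh ⟨z, mem_sphere_zero_iff_norm.mpr hz⟩⟩

/-- The image of the unit circle under a Laurent polynomial is contained in the zero
set of a nonzero real polynomial in two variables. -/
theorem stmt_2 (m n : ℕ) (hn : 1 ≤ n) (a : ℤ → ℂ)
    (ha : a (-(m : ℤ)) * a (n : ℤ) ≠ 0) :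
    ∃ h : MvPolynomial (Fin 2) ℝ, h ≠ 0 ∧
      ∀ z : ℂ, ‖z‖ = 1 →
        MvPolynomial.eval
          ![(∑ k ∈ Finset.Icc (-(m : ℤ)) (n : ℤ), a k * z ^ k).re,
            (∑ k ∈ Finset.Icc (-(m : ℤ)) (n : ℤ), a k * z ^ k).im] h = 0 :=
  stmt_2_general m n a
end

section
/- Let g and g* be monic-degree m+n polynomials with roots z_1, ..., z_{m+n} and 1/conj(z_1), ..., 1/conj(z_{m+n}) respectively (all z_j ≠ 0), with leading coefficients a_n and conj(a_{-m}). Then Res(g, g*) = (-1)^{m+n} |a_n|^{2(m+n)} ∏_{i,j=1}^{m+n} (z_i conj(z_j) - 1), and in particular Res(g, g*) is a real number. -/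
open Finset

/-!
With `N = m + n`, clearing denominators row by row gives
`∏ i, ∏ j, (z i - (conj z j)⁻¹) = (∏ i, ∏ j, (z i * conj z j - 1)) / (∏ j, conj z j) ^ N`,
and Vieta's relation `conj a_{-m} = (-1)^N conj a_n ∏ j, conj z j` cancels the denominator
against `conj a_{-m} ^ N`, leaving `(-1)^N |a_n|^{2N}`. The remaining double product is real
because conjugation maps the factor indexed by `(i, j)` to the one indexed by `(j, i)`.
-/

theorem prod_prod_sub_inv {ι κ K : Type*} [Fintype ι] [Fintype κ] [Field K]
    (x : ι → K) (y : κ → K) (hy : ∀ j, y j ≠ 0) :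
    ∏ i, ∏ j, (x i - (y j)⁻¹) = (∏ i, ∏ j, (x i * y j - 1)) / (∏ j, y j) ^ Fintype.card ι := by
  rw [← card_univ, ← prod_const, ← prod_div_distrib]
  refine prod_congr rfl fun i _ => ?_
  rw [← prod_div_distrib]
  refine prod_congr rfl fun j _ => ?_
  field_simp [hy j]

theorem isSelfAdjoint_prod_prod_mul_star_sub_one {ι R : Type*} [Fintype ι] [CommRing R]
    [StarRing R] (z : ι → R) : IsSelfAdjoint (∏ i, ∏ j, (z i * star (z j) - 1)) := by
  simp only [IsSelfAdjoint, star_prod, star_sub, star_mul, star_star, star_one]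
  rw [prod_comm]

theorem stmt_3_general (m n : ℕ) (an am : ℂ) (han : an ≠ 0)
    (z : Fin (m + n) → ℂ) (hz : ∀ j, z j ≠ 0)
    (hprod : ∏ j, z j = (-1) ^ (m + n) * am / an) :
    an ^ (m + n) * (starRingEnd ℂ) am ^ (m + n) *
        ∏ i, ∏ j, (z i - ((starRingEnd ℂ) (z j))⁻¹) =
      (-1 : ℂ) ^ (m + n) * (‖an‖ : ℂ) ^ (2 * (m + n)) *
        ∏ i, ∏ j, (z i * (starRingEnd ℂ) (z j) - 1) ∧
    ∃ r : ℝ,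
      an ^ (m + n) * (starRingEnd ℂ) am ^ (m + n) *
        ∏ i, ∏ j, (z i - ((starRingEnd ℂ) (z j))⁻¹) = (r : ℂ) := by
  have hcz : ∀ j, (starRingEnd ℂ) (z j) ≠ 0 := fun j => (map_ne_zero _).mpr (hz j)
  have hsign : ((-1 : ℂ) ^ (m + n)) * (-1) ^ (m + n) = 1 := by rw [← mul_pow]; norm_num
  have hsign_pow : ((-1 : ℂ) ^ (m + n)) ^ (m + n) = (-1) ^ (m + n) := by
    rcases neg_one_pow_eq_or ℂ (m + n) with h | h <;> simp [h]
  have hvieta : am = (-1) ^ (m + n) * an * ∏ j, z j := by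
    rw [hprod]
    field_simp
    linear_combination (-am) * hsign
  have hformula : an ^ (m + n) * (starRingEnd ℂ) am ^ (m + n) *
      ∏ i, ∏ j, (z i - ((starRingEnd ℂ) (z j))⁻¹) =
      (-1 : ℂ) ^ (m + n) * (‖an‖ : ℂ) ^ (2 * (m + n)) *
        ∏ i, ∏ j, (z i * (starRingEnd ℂ) (z j) - 1) := by
    have hC : ∏ j, (starRingEnd ℂ) (z j) ≠ 0 := prod_ne_zero_iff.mpr fun j _ => hcz j
    rw [prod_prod_sub_inv _ _ hcz, Fintype.card_fin, hvieta, map_mul, map_mul, map_prod, map_pow,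
      map_neg, map_one, mul_pow, mul_pow, hsign_pow, pow_mul, ← Complex.mul_conj']
    field_simp [hC]
    ring
  refine ⟨hformula, _, hformula.trans (Complex.conj_eq_iff_re.mp ?_).symm⟩
  simp only [map_mul, map_pow, map_neg, map_one, Complex.conj_ofReal]
  exact congrArg _ (isSelfAdjoint_prod_prod_mul_star_sub_one z)

/-- Resultant formula: with `g(z) = a_n ∏ (z - z_j)` and
`g*(z) = conj(a_{-m}) ∏ (z - 1/conj(z_j))`, where `∏ z_j = (-1)^{m+n} a_{-m}/a_n`,
the resultant `a_n^{m+n} conj(a_{-m})^{m+n} ∏_{i,j} (z_i - 1/conj(z_j))` equals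
`(-1)^{m+n} |a_n|^{2(m+n)} ∏_{i,j} (z_i conj(z_j) - 1)`, and it is real. -/
theorem stmt_3 (m n : ℕ) (an am : ℂ) (han : an ≠ 0) (ham : am ≠ 0)
    (z : Fin (m + n) → ℂ) (hz : ∀ j, z j ≠ 0)
    (hprod : ∏ j, z j = (-1) ^ (m + n) * am / an) :
    an ^ (m + n) * (starRingEnd ℂ) am ^ (m + n) *
        ∏ i, ∏ j, (z i - ((starRingEnd ℂ) (z j))⁻¹) =
      (-1 : ℂ) ^ (m + n) * (‖an‖ : ℂ) ^ (2 * (m + n)) *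
        ∏ i, ∏ j, (z i * (starRingEnd ℂ) (z j) - 1) ∧
    ∃ r : ℝ,
      an ^ (m + n) * (starRingEnd ℂ) am ^ (m + n) *
        ∏ i, ∏ j, (z i - ((starRingEnd ℂ) (z j))⁻¹) = (r : ℂ) :=
  stmt_3_general m n an am han z hz hprod
end

section
/- Let F = (F₁, F₂) : ℝ² → ℝ² be a polynomial map and let H = (H₁, H₂) where H_i is the top-degree homogeneous part of F_i. If H(x) ≠ 0 for all x ∈ ℝ² \ {0}, then F is proper: |F(x)| → ∞ as |x| → ∞. -/
/-!
Write `F = H + L` with `H` the top homogeneous part of degree `d ≥ 1` and `deg L ≤ d - 1`.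
For `‖x‖ = r ≥ 1` and `u = x / r`, homogeneity gives `|H x| = r ^ d |H u|` while
`|L x| ≤ C r ^ (d - 1)`, so `|F x| ≥ |H u| r - C`. Since `H₁` and `H₂` have no common zero on the
compact unit sphere, `max |H₁ u| |H₂ u|` is bounded below there by some `c > 0`, whence
`‖F x‖ ≥ c ‖x‖ - C`.
-/

open MvPolynomial Filter

namespace MvPolynomial

variable {σ R : Type*}

theorem IsHomogeneous.eval_smul [CommSemiring R] {φ : MvPolynomial σ R} {n : ℕ}
    (hφ : φ.IsHomogeneous n) (r : R) (x : σ → R) :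
    eval (r • x) φ = r ^ n * eval x φ := by
  rw [eval_eq, eval_eq, Finset.mul_sum]
  refine Finset.sum_congr rfl fun m hm => ?_
  have hdeg : ∑ i ∈ m.support, m i = n := by
    rw [← Finsupp.degree_apply, Finsupp.degree_eq_weight_one]
    exact hφ (mem_support_iff.mp hm)
  simp only [Pi.smul_apply, smul_eq_mul, mul_pow, Finset.prod_mul_distrib,
    Finset.prod_pow_eq_pow_sum, hdeg]
  ring

theorem totalDegree_sub_homogeneousComponent_le [CommRing R] (F : MvPolynomial σ R) :
    (F - homogeneousComponent F.totalDegree F).totalDegree ≤ F.totalDegree - 1 := by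
  refine Finset.sup_le fun m hm => ?_
  rw [mem_support_iff, coeff_sub, coeff_homogeneousComponent] at hm
  split_ifs at hm with h
  · simp at hm
  · have := le_totalDegree (mem_support_iff.mpr (sub_zero (coeff m F) ▸ hm))
    change m.sum (fun _ e => e) ≠ F.totalDegree at h
    omega

theorem abs_eval_le_sum_abs_coeff_mul [Fintype σ] (P : MvPolynomial σ ℝ) (x : σ → ℝ) :
    |eval x P| ≤ (∑ m ∈ P.support, |P.coeff m|) * max 1 ‖x‖ ^ P.totalDegree := by
  have h1 : (1 : ℝ) ≤ max 1 ‖x‖ := le_max_left _ _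
  rw [eval_eq, Finset.sum_mul]
  refine (Finset.abs_sum_le_sum_abs _ _).trans (Finset.sum_le_sum fun m hm => ?_)
  rw [abs_mul]
  refine mul_le_mul_of_nonneg_left ?_ (abs_nonneg _)
  calc |∏ i ∈ m.support, x i ^ m i|
      ≤ ∏ i ∈ m.support, max 1 ‖x‖ ^ m i := by
        rw [Finset.abs_prod]
        refine Finset.prod_le_prod (fun _ _ => abs_nonneg _) fun i _ => ?_
        rw [abs_pow]
        exact pow_le_pow_left₀ (abs_nonneg _)
          ((Real.norm_eq_abs (x i) ▸ norm_le_pi_norm x i).trans (le_max_right 1 ‖x‖)) _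
    _ = max 1 ‖x‖ ^ (∑ i ∈ m.support, m i) := Finset.prod_pow_eq_pow_sum _ _ _
    _ ≤ max 1 ‖x‖ ^ P.totalDegree := pow_le_pow_right₀ h1 (le_totalDegree hm)

theorem exists_abs_eval_homogeneousComponent_mul_norm_sub_le [Fintype σ]
    (F : MvPolynomial σ ℝ) (hd : 1 ≤ F.totalDegree) :
    ∃ C : ℝ, ∀ x : σ → ℝ, 1 ≤ ‖x‖ →
      |eval (‖x‖⁻¹ • x) (homogeneousComponent F.totalDegree F)| * ‖x‖ - C ≤ |eval x F| := by
  set d := F.totalDegree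
  set H := homogeneousComponent d F
  set L := F - H
  refine ⟨∑ m ∈ L.support, |L.coeff m|, fun x hx => ?_⟩
  set C := ∑ m ∈ L.support, |L.coeff m|
  set r := ‖x‖
  set a := |eval (r⁻¹ • x) H|
  have hr : 0 < r := one_pos.trans_le hx
  have hH : |eval x H| = a * r ^ d := by
    rw [← smul_inv_smul₀ hr.ne' x, (homogeneousComponent_isHomogeneous d F).eval_smul,
      abs_mul, abs_pow, abs_of_pos hr, mul_comm]
  have hL : |eval x L| ≤ C * r ^ (d - 1) := by
    refine (abs_eval_le_sum_abs_coeff_mul L x).trans (mul_le_mul_of_nonneg_left ?_ ?_)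
    · rw [max_eq_right hx]
      exact pow_le_pow_right₀ hx (totalDegree_sub_homogeneousComponent_le F)
    · exact Finset.sum_nonneg fun _ _ => abs_nonneg _
  have hsplit : |eval x H| ≤ |eval x F| + |eval x L| := by
    have : eval x H = eval x F - eval x L := by simp only [L, map_sub]; ring
    exact this ▸ abs_sub _ _
  have hpow : r ^ d = r ^ (d - 1) * r := by rw [← pow_succ, Nat.sub_add_cancel hd]
  by_cases hneg : a * r - C ≤ 0
  · exact hneg.trans (abs_nonneg _)
  calc a * r - C ≤ r ^ (d - 1) * (a * r - C) :=
        le_mul_of_one_le_left (not_le.mp hneg).le (one_le_pow₀ hx)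
    _ = a * r ^ d - C * r ^ (d - 1) := by rw [hpow]; ring
    _ ≤ |eval x F| := by linarith

end MvPolynomial

/-- Campbell's lemma in the plane: if the top-degree homogeneous parts of a polynomial
map `F = (F₁, F₂) : ℝ² → ℝ²` have no common zero away from the origin, then `F` is
proper. -/
theorem stmt_14 (F₁ F₂ : MvPolynomial (Fin 2) ℝ)
    (hd₁ : 1 ≤ F₁.totalDegree) (hd₂ : 1 ≤ F₂.totalDegree)
    (hH : ∀ x : Fin 2 → ℝ, x ≠ 0 →
      ¬ (MvPolynomial.eval x (MvPolynomial.homogeneousComponent F₁.totalDegree F₁) = 0 ∧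
         MvPolynomial.eval x (MvPolynomial.homogeneousComponent F₂.totalDegree F₂) = 0)) :
    Filter.Tendsto
      (fun x : Fin 2 → ℝ => ‖(MvPolynomial.eval x F₁, MvPolynomial.eval x F₂)‖)
      (Bornology.cobounded (Fin 2 → ℝ)) Filter.atTop := by
  set H₁ := homogeneousComponent F₁.totalDegree F₁
  set H₂ := homogeneousComponent F₂.totalDegree F₂
  obtain ⟨c, hc, hmin⟩ : ∃ c, 0 < c ∧ ∀ u ∈ Metric.sphere (0 : Fin 2 → ℝ) 1,
      c ≤ max |eval u H₁| |eval u H₂| := by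
    refine (isCompact_sphere 0 1).exists_forall_le'
      ((continuous_eval H₁).abs.max (continuous_eval H₂).abs).continuousOn fun u hu => ?_
    have hu0 : u ≠ 0 := ne_zero_of_mem_unit_sphere (⟨u, hu⟩ : Metric.sphere _ 1)
    by_contra! hle
    exact hH u hu0 ⟨abs_nonpos_iff.mp ((le_max_left _ _).trans hle),
      abs_nonpos_iff.mp ((le_max_right _ _).trans hle)⟩
  obtain ⟨C₁, hC₁⟩ := exists_abs_eval_homogeneousComponent_mul_norm_sub_le F₁ hd₁
  obtain ⟨C₂, hC₂⟩ := exists_abs_eval_homogeneousComponent_mul_norm_sub_le F₂ hd₂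
  have hlow : Tendsto (fun x : Fin 2 → ℝ => c * ‖x‖ - max C₁ C₂)
      (Bornology.cobounded (Fin 2 → ℝ)) atTop :=
    tendsto_atTop_add_const_right _ _ (tendsto_norm_cobounded_atTop.const_mul_atTop hc)
  refine tendsto_atTop_mono' _ ?_ hlow
  filter_upwards [tendsto_norm_cobounded_atTop.eventually_ge_atTop 1] with x hx
  have hu : ‖x‖⁻¹ • x ∈ Metric.sphere (0 : Fin 2 → ℝ) 1 :=
    mem_sphere_zero_iff_norm.mpr (norm_smul_inv_norm (norm_pos_iff.mp (one_pos.trans_le hx)))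
  rw [Prod.norm_def, Real.norm_eq_abs, Real.norm_eq_abs]
  rcases le_max_iff.mp (hmin _ hu) with h | h
  · nlinarith [hC₁ x hx, le_max_left C₁ C₂, le_max_left |eval x F₁| |eval x F₂|]
  · nlinarith [hC₂ x hx, le_max_right C₁ C₂, le_max_right |eval x F₁| |eval x F₂|]
end

section
/- If p(𝕋) is contained in a line and p is nonconstant, then the zero set of P(z) = p(z) - p(1/conj(z)) is unbounded. -/
/-!
After rotating by `η` and discarding the constant term, the coefficients satisfy
`c (-k) = -conj (c k)`, so `η P(z) = 2 Re q(z)` for the Laurent polynomial `q(z) = ∑ c k z ^ k`.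
If `m ≥ 1` is the top index with `c m ≠ 0`, then on the circle `|z| = r` with `r` large the term
`c m z ^ m` dominates `q`; choosing `z` with `c m z ^ m = ±|c m| r ^ m` shows that `Re q` changes
sign on that circle, hence vanishes somewhere on it.
-/

open Finset ComplexConjugate Function

noncomputable def laurentSum (s : Finset ℤ) (c : ℤ → ℂ) (z : ℂ) : ℂ := ∑ k ∈ s, c k * z ^ k

lemma laurentSum_const_mul (s : Finset ℤ) (η : ℂ) (c : ℤ → ℂ) (z : ℂ) :
    laurentSum s (fun k => η * c k) z = η * laurentSum s c z := by
  simp only [laurentSum, mul_sum, mul_assoc]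

lemma laurentSum_update_zero {s : Finset ℤ} (hs : 0 ∈ s) (c : ℤ → ℂ) (x z : ℂ) :
    laurentSum s (update c 0 x) z = laurentSum s c z - c 0 + x := by
  unfold laurentSum
  rw [← add_sum_erase s _ hs, ← add_sum_erase s _ hs,
    sum_congr rfl fun k hk => by rw [update_of_ne (ne_of_mem_erase hk)]]
  simp only [update_self, zpow_zero, mul_one]
  ring

lemma laurentSum_conj_inv_of_skew {s : Finset ℤ} (hs : ∀ k ∈ s, -k ∈ s) {c : ℤ → ℂ}
    (hc : ∀ k ∈ s, c (-k) = -conj (c k)) (z : ℂ) :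
    laurentSum s c (conj z)⁻¹ = -conj (laurentSum s c z) := by
  unfold laurentSum
  rw [map_sum, ← sum_neg_distrib]
  refine sum_nbij' Neg.neg Neg.neg (fun k hk => hs k hk) (fun k hk => hs k hk)
    (fun k _ => neg_neg k) (fun k _ => neg_neg k) fun k hk => ?_
  rw [hc k hk, map_mul, map_neg, Complex.conj_conj, map_zpow₀, inv_zpow', neg_mul, neg_neg]

lemma laurentSum_eq_conj_inv_iff_re_eq_zero {s : Finset ℤ} (hs : ∀ k ∈ s, -k ∈ s)
    {c : ℤ → ℂ} (hc : ∀ k ∈ s, c (-k) = -conj (c k)) (z : ℂ) :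
    laurentSum s c z = laurentSum s c (conj z)⁻¹ ↔ (laurentSum s c z).re = 0 := by
  rw [laurentSum_conj_inv_of_skew hs hc, eq_neg_iff_add_eq_zero, Complex.add_conj]
  norm_cast
  simp

lemma continuousOn_laurentSum (s : Finset ℤ) (c : ℤ → ℂ) :
    ContinuousOn (laurentSum s c) {0}ᶜ := by
  unfold laurentSum
  fun_prop (disch := simp_all)

lemma norm_laurentSum_sub_le {s : Finset ℤ} {c : ℤ → ℂ} {m : ℤ} (hm : m ∈ s)
    (hc : ∀ k ∈ s, m < k → c k = 0) {z : ℂ} (hz : 1 ≤ ‖z‖) :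
    ‖laurentSum s c z - c m * z ^ m‖ ≤ (∑ k ∈ s, ‖c k‖) * ‖z‖ ^ (m - 1) := by
  rw [laurentSum, ← sum_erase_eq_sub hm, sum_mul]
  calc ‖∑ k ∈ s.erase m, c k * z ^ k‖ ≤ ∑ k ∈ s.erase m, ‖c k‖ * ‖z‖ ^ (m - 1) := by
        refine norm_sum_le_of_le _ fun k hk => ?_
        obtain ⟨hkm, hks⟩ := mem_erase.1 hk
        rw [norm_mul, norm_zpow]
        rcases lt_or_gt_of_ne hkm with hlt | hgt
        · exact mul_le_mul_of_nonneg_left (zpow_le_zpow_right₀ hz (by omega)) (norm_nonneg _)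
        · simp [hc k hks hgt]
    _ ≤ ∑ k ∈ s, ‖c k‖ * ‖z‖ ^ (m - 1) :=
        sum_le_sum_of_subset_of_nonneg (erase_subset m s) fun k _ _ => by positivity

lemma exists_norm_eq_mul_pow_eq {c : ℂ} (hc : c ≠ 0) {m : ℕ} (hm : m ≠ 0) {r : ℝ} (hr : 0 ≤ r)
    {w : ℂ} (hw : ‖w‖ = ‖c‖ * r ^ m) : ∃ z : ℂ, ‖z‖ = r ∧ c * z ^ m = w := by
  obtain ⟨z, hz⟩ := IsAlgClosed.exists_pow_nat_eq (w / c) (Nat.pos_of_ne_zero hm)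
  refine ⟨z, (pow_left_inj₀ (norm_nonneg z) hr hm).1 ?_, by rw [hz, mul_div_cancel₀ w hc]⟩
  rw [← norm_pow, hz, norm_div, hw, mul_div_cancel_left₀ _ (norm_ne_zero_iff.2 hc)]

lemma exists_norm_eq_abs_re_laurentSum_sub_le {s : Finset ℤ} {c : ℤ → ℂ} {m : ℕ}
    (hm0 : m ≠ 0) (hm : (m : ℤ) ∈ s) (hcm : c m ≠ 0) (hc : ∀ k ∈ s, (m : ℤ) < k → c k = 0)
    {r : ℝ} (hr : 1 ≤ r) {t : ℝ} (ht : |t| = 1) : ∃ z : ℂ, ‖z‖ = r ∧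
      |(laurentSum s c z).re - t * (‖c m‖ * r ^ m)| ≤ (∑ k ∈ s, ‖c k‖) * r ^ ((m : ℤ) - 1) := by
  obtain ⟨z, hz, hcz⟩ := exists_norm_eq_mul_pow_eq hcm hm0 (r := r) (by linarith)
    (w := ((t * (‖c m‖ * r ^ m) : ℝ) : ℂ))
    (by rw [Complex.norm_real, Real.norm_eq_abs, abs_mul, ht, abs_of_nonneg (by positivity),
      one_mul])
  refine ⟨z, hz, ?_⟩
  have hbound := norm_laurentSum_sub_le hm hc (z := z) (by rw [hz]; exact hr)
  rw [zpow_natCast, hcz, hz] at hbound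
  calc |(laurentSum s c z).re - t * (‖c m‖ * r ^ m)|
      = |(laurentSum s c z - ((t * (‖c m‖ * r ^ m) : ℝ) : ℂ)).re| := by
        rw [Complex.sub_re, Complex.ofReal_re]
    _ ≤ _ := (Complex.abs_re_le_norm _).trans hbound

theorem exists_re_laurentSum_eq_zero_of_lt_norm {s : Finset ℤ} {c : ℤ → ℂ} {m : ℕ}
    (hm0 : m ≠ 0) (hm : (m : ℤ) ∈ s) (hcm : c m ≠ 0) (hc : ∀ k ∈ s, (m : ℤ) < k → c k = 0)
    (R : ℝ) : ∃ z : ℂ, R < ‖z‖ ∧ (laurentSum s c z).re = 0 := by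
  set C := ∑ k ∈ s, ‖c k‖
  have hcm_pos : 0 < ‖c m‖ := norm_pos_iff.2 hcm
  set r := max (max R 1) (C / ‖c m‖) + 1
  have hr_max := le_max_left (max R 1) (C / ‖c m‖)
  have hr1 : 1 ≤ r := by linarith [le_max_right R 1]
  have hRr : R < r := by linarith [le_max_left R 1]
  have hCr : C < ‖c m‖ * r := by
    rw [mul_comm, ← div_lt_iff₀ hcm_pos]
    linarith [le_max_right (max R 1) (C / ‖c m‖)]
  have hgap : C * r ^ ((m : ℤ) - 1) < ‖c m‖ * r ^ m := by
    have hpow : r ^ m = r ^ ((m : ℤ) - 1) * r := by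
      rw [← zpow_natCast, ← zpow_add_one₀ (by positivity), sub_add_cancel]
    rw [hpow, mul_comm C, mul_left_comm]
    exact mul_lt_mul_of_pos_left hCr (by positivity)
  obtain ⟨zp, hzp, hp⟩ := exists_norm_eq_abs_re_laurentSum_sub_le hm0 hm hcm hc hr1 abs_one
  obtain ⟨zn, hzn, hn⟩ :=
    exists_norm_eq_abs_re_laurentSum_sub_le hm0 hm hcm hc hr1 (t := -1) (by simp)
  rw [abs_le] at hp hn
  have hconn : IsPreconnected (Metric.sphere (0 : ℂ) r) :=
    (isConnected_sphere (by rw [Complex.rank_real_complex]; norm_num) 0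
      (by linarith)).isPreconnected
  have hcont : ContinuousOn (fun z => (laurentSum s c z).re) (Metric.sphere 0 r) :=
    Complex.continuous_re.comp_continuousOn <| (continuousOn_laurentSum s c).mono fun z hz =>
      ne_zero_of_mem_sphere (by linarith) ⟨z, hz⟩
  obtain ⟨z, hz, hz0⟩ := hconn.intermediate_value (mem_sphere_zero_iff_norm.2 hzn)
    (mem_sphere_zero_iff_norm.2 hzp) hcont
    (show (0 : ℝ) ∈ Set.Icc _ _ from ⟨by linarith, by linarith⟩)
  exact ⟨z, (mem_sphere_zero_iff_norm.1 hz).symm ▸ hRr, hz0⟩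

lemma update_zero_skew {n : ℕ} {b : ℤ → ℂ}
    (hb : ∀ k : ℤ, 1 ≤ k → k ≤ n → b k = -conj (b (-k))) :
    ∀ k ∈ Icc (-(n : ℤ)) n, update b 0 0 (-k) = -conj (update b 0 0 k) := by
  intro k hk
  rw [mem_Icc] at hk
  rcases lt_trichotomy k 0 with hneg | rfl | hpos
  · rw [update_of_ne (by omega), update_of_ne hneg.ne, hb (-k) (by omega) (by omega), neg_neg]
  · simp
  · rw [update_of_ne (by omega), update_of_ne hpos.ne', hb k hpos hk.2, map_neg,
      Complex.conj_conj, neg_neg]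

lemma exists_greatest_ne_zero {M : Type*} [Zero M] {c : ℤ → M} {n : ℕ}
    (h : ∃ k : ℤ, 1 ≤ k ∧ k ≤ n ∧ c k ≠ 0) :
    ∃ m : ℕ, m ≠ 0 ∧ m ≤ n ∧ c m ≠ 0 ∧ ∀ k : ℤ, (m : ℤ) < k → k ≤ n → c k = 0 := by
  classical
  obtain ⟨k, hk1, hkn, hck⟩ := h
  lift k to ℕ using by omega
  have hP : k ≠ 0 ∧ c k ≠ 0 := ⟨by omega, hck⟩
  obtain ⟨hm0, hcm⟩ :=
    Nat.findGreatest_spec (P := fun j : ℕ => j ≠ 0 ∧ c j ≠ 0) (n := n) (by omega : k ≤ n) hP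
  refine ⟨_, hm0, Nat.findGreatest_le n, hcm, fun j hmj hjn => ?_⟩
  lift j to ℕ using by omega
  by_contra hcj
  exact Nat.findGreatest_is_greatest (P := fun j : ℕ => j ≠ 0 ∧ c j ≠ 0) (by omega)
    (by omega : j ≤ n) ⟨by omega, hcj⟩

theorem stmt_17_general (n : ℕ) (a : ℤ → ℂ)
    (hnc : ∃ k : ℤ, k ≠ 0 ∧ -(n : ℤ) ≤ k ∧ k ≤ (n : ℤ) ∧ a k ≠ 0)
    (hline : ∃ η : ℂ, ‖η‖ = 1 ∧
      ∀ k : ℤ, 1 ≤ k → k ≤ (n : ℤ) → η * a k = -(starRingEnd ℂ) (η * a (-k))) :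
    ∀ R : ℝ, ∃ z : ℂ, z ≠ 0 ∧ R < ‖z‖ ∧
      (∑ k ∈ Finset.Icc (-(n : ℤ)) (n : ℤ), a k * z ^ k) =
        (∑ k ∈ Finset.Icc (-(n : ℤ)) (n : ℤ), a k * (((starRingEnd ℂ) z)⁻¹) ^ k) := by
  intro R
  obtain ⟨η, hη, hb⟩ := hline
  have hη0 : η ≠ 0 := norm_ne_zero_iff.1 (by rw [hη]; exact one_ne_zero)
  have hsymm : ∀ k ∈ Icc (-(n : ℤ)) n, -k ∈ Icc (-(n : ℤ)) n := fun k hk => by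
    rw [mem_Icc] at hk ⊢; omega
  -- The constant term cancels in `P`, so it may be set to `0`, which makes `c` skew at `k = 0` too.
  have hskew := update_zero_skew (b := fun k => η * a k) hb
  set c := update (fun k => η * a k) 0 0 with hc_def
  have hpos : ∃ k : ℤ, 1 ≤ k ∧ k ≤ n ∧ c k ≠ 0 := by
    obtain ⟨k, hk0, hkl, hku, hak⟩ := hnc
    have hck : c k ≠ 0 := by rw [hc_def, update_of_ne hk0]; exact mul_ne_zero hη0 hak
    rcases lt_or_gt_of_ne hk0 with hneg | hkpos
    · exact ⟨-k, by omega, by omega, by simpa [hskew k (mem_Icc.2 ⟨hkl, hku⟩)] using hck⟩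
    · exact ⟨k, hkpos, hku, hck⟩
  obtain ⟨m, hm0, hmn, hcm, hc⟩ := exists_greatest_ne_zero hpos
  obtain ⟨z, hRz, hre⟩ := exists_re_laurentSum_eq_zero_of_lt_norm hm0
    (mem_Icc.2 ⟨by omega, by omega⟩ : (m : ℤ) ∈ Icc (-(n : ℤ)) n) hcm
    (fun k hk hmk => hc k hmk (mem_Icc.1 hk).2) (max R 0)
  refine ⟨z, norm_pos_iff.1 ((le_max_right R 0).trans_lt hRz), (le_max_left R 0).trans_lt hRz, ?_⟩
  have h0 : (0 : ℤ) ∈ Icc (-(n : ℤ)) n := mem_Icc.2 ⟨by omega, by omega⟩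
  have hP := (laurentSum_eq_conj_inv_iff_re_eq_zero hsymm hskew z).2 hre
  rw [laurentSum_update_zero h0, laurentSum_update_zero h0, laurentSum_const_mul,
    laurentSum_const_mul] at hP
  show laurentSum _ a z = laurentSum _ a _
  exact mul_left_cancel₀ hη0 (by linear_combination hP)

/-- If `p(𝕋)` is contained in a line and `p` is nonconstant, then the zero set of
`P(z) = p(z) - p(1/conj z)` is unbounded. -/
theorem stmt_17 (n : ℕ) (hn : 1 ≤ n) (a : ℤ → ℂ)
    (hnc : ∃ k : ℤ, k ≠ 0 ∧ -(n : ℤ) ≤ k ∧ k ≤ (n : ℤ) ∧ a k ≠ 0)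
    (hline : ∃ η : ℂ, ‖η‖ = 1 ∧
      ∀ k : ℤ, 1 ≤ k → k ≤ (n : ℤ) → η * a k = -(starRingEnd ℂ) (η * a (-k))) :
    ∀ R : ℝ, ∃ z : ℂ, z ≠ 0 ∧ R < ‖z‖ ∧
      (∑ k ∈ Finset.Icc (-(n : ℤ)) (n : ℤ), a k * z ^ k) =
        (∑ k ∈ Finset.Icc (-(n : ℤ)) (n : ℤ), a k * (((starRingEnd ℂ) z)⁻¹) ^ k) :=
  stmt_17_general n a hnc hline
end

section
/- For each N ≥ 1 there exist distinct points a_1, ..., a_N with 0 < |a_k| < 1 and a polynomial p such that p(a_k) = p(1/conj(a_k)) = k for k = 1, ..., N and |p(z)| > N for all |z| = 1. Consequently the set E = {z ≠ 0 : p(z) = p(1/conj(z))} satisfies {1, ..., N} ⊆ p(E) \ p(𝕋). -/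
open Polynomial

/-!
Interpolate the prescribed values at the `2N` points `a_k`, `1 / conj(a_k)` by a polynomial `q`,
and let `r` be the polynomial vanishing exactly at these points. None of them lies on the unit
circle, so by compactness `|r|` is bounded below there by some `c > 0` while `|q|` stays bounded;
hence `p = q + M r` still interpolates and exceeds `N` in modulus on the circle once `M` is large.
Values attained at interpolation nodes are then in `p(E)` but, being at most `N`, not in `p(𝕋)`.
-/

section Interpolation

variable {𝕜 : Type*} [NontriviallyNormedField 𝕜]

theorem exists_forall_lt_norm_eval_add_C_mul {K : Set 𝕜} (hK : IsCompact K) (q r : 𝕜[X])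
    (hr : ∀ z ∈ K, r.eval z ≠ 0) (B : ℝ) :
    ∃ m : 𝕜, ∀ z ∈ K, B < ‖(q + C m * r).eval z‖ := by
  obtain ⟨c, hc, hrc⟩ := hK.exists_forall_le' r.continuous.norm.continuousOn
    (a := 0) fun z hz => norm_pos_iff.2 (hr z hz)
  obtain ⟨Q, hqQ⟩ := hK.exists_bound_of_continuousOn q.continuous.continuousOn
  obtain ⟨m, hm⟩ := NormedField.exists_lt_norm 𝕜 ((B + Q) / c)
  refine ⟨m, fun z hz => ?_⟩
  have hmc : B + Q < ‖m‖ * c := (div_lt_iff₀ hc).1 hm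
  calc B < ‖m‖ * c - Q := by linarith
    _ ≤ ‖m‖ * ‖r.eval z‖ - ‖q.eval z‖ :=
      sub_le_sub (mul_le_mul_of_nonneg_left (hrc z hz) (norm_nonneg m)) (hqQ z hz)
    _ = ‖m * r.eval z‖ - ‖-q.eval z‖ := by rw [norm_mul, norm_neg]
    _ ≤ ‖m * r.eval z - -q.eval z‖ := norm_sub_norm_le _ _
    _ = ‖(q + C m * r).eval z‖ := by rw [eval_add, eval_mul, eval_C, sub_neg_eq_add, add_comm]

theorem exists_interpolate_forall_lt_norm_eval {ι : Type*} [Fintype ι] {v : ι → 𝕜}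
    (hv : Function.Injective v) (y : ι → 𝕜) {K : Set 𝕜} (hK : IsCompact K)
    (hvK : ∀ i, v i ∉ K) (B : ℝ) :
    ∃ p : 𝕜[X], (∀ i, p.eval (v i) = y i) ∧ ∀ z ∈ K, B < ‖p.eval z‖ := by
  classical
  have hnodal : ∀ z ∈ K, (Lagrange.nodal Finset.univ v).eval z ≠ 0 := fun z hz =>
    Lagrange.eval_nodal_not_at_node fun i _ hzi => hvK i (hzi ▸ hz)
  obtain ⟨m, hm⟩ := exists_forall_lt_norm_eval_add_C_mul hK
    (Lagrange.interpolate Finset.univ v y) _ hnodal B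
  refine ⟨_, fun i => ?_, hm⟩
  rw [eval_add, eval_mul, Lagrange.eval_nodal_at_node (Finset.mem_univ i), mul_zero, add_zero,
    Lagrange.eval_interpolate_at_node _ hv.injOn (Finset.mem_univ i)]

end Interpolation

theorem exists_eval_reflection_eq_forall_lt_norm_eval_of_norm_eq_one {ι : Type*} [Fintype ι]
    {a : ι → ℂ} (ha : Function.Injective a) (ha_norm : ∀ k, 0 < ‖a k‖ ∧ ‖a k‖ < 1)
    (y : ι → ℂ) (B : ℝ) :
    ∃ p : ℂ[X], (∀ k, p.eval (a k) = y k ∧ p.eval (starRingEnd ℂ (a k))⁻¹ = y k) ∧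
      ∀ z : ℂ, ‖z‖ = 1 → B < ‖p.eval z‖ := by
  have hrefl_norm : ∀ k, 1 < ‖(starRingEnd ℂ (a k))⁻¹‖ := fun k => by
    rw [norm_inv, Complex.norm_conj]
    exact one_lt_inv_iff₀.2 (ha_norm k)
  have hrefl : Function.Injective fun k => (starRingEnd ℂ (a k))⁻¹ :=
    inv_injective.comp ((RingHom.injective _).comp ha)
  have hdisj : ∀ j k, a j ≠ (starRingEnd ℂ (a k))⁻¹ := fun j k h =>
    ((ha_norm j).2.trans (hrefl_norm k)).ne (congrArg norm h)
  obtain ⟨p, hp, hlarge⟩ := exists_interpolate_forall_lt_norm_eval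
    (ha.sumElim hrefl hdisj) (Sum.elim y y) (isCompact_sphere 0 1)
    (by
      rintro (k | k) hk <;> rw [mem_sphere_zero_iff_norm] at hk
      exacts [(ha_norm k).2.ne hk, (hrefl_norm k).ne' hk])
    B
  exact ⟨p, fun k => ⟨hp (.inl k), hp (.inr k)⟩,
    fun z hz => hlarge z (mem_sphere_zero_iff_norm.2 hz)⟩

theorem injective_inv_natCast_add_two : Function.Injective fun n : ℕ => ((n : ℂ) + 2)⁻¹ :=
  fun m n h => by simpa using inv_injective h

theorem norm_inv_natCast_add_two (n : ℕ) :
    0 < ‖((n : ℂ) + 2)⁻¹‖ ∧ ‖((n : ℂ) + 2)⁻¹‖ < 1 := by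
  have : ‖(n : ℂ) + 2‖ = n + 2 := by exact_mod_cast Complex.norm_natCast (n + 2)
  rw [norm_inv, this]
  exact ⟨by positivity, inv_lt_one_of_one_lt₀ (by linarith [n.cast_nonneg (α := ℝ)])⟩

theorem stmt_18_general (N : ℕ) :
    ∃ (a : Fin N → ℂ) (p : Polynomial ℂ),
      Function.Injective a ∧
      (∀ k : Fin N, 0 < ‖a k‖ ∧ ‖a k‖ < 1) ∧
      (∀ k : Fin N,
        Polynomial.eval (a k) p = ((k : ℕ) + 1 : ℂ) ∧
        Polynomial.eval (((starRingEnd ℂ) (a k))⁻¹) p = ((k : ℕ) + 1 : ℂ)) ∧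
      (∀ z : ℂ, ‖z‖ = 1 → (N : ℝ) < ‖Polynomial.eval z p‖) ∧
      (∀ k : Fin N,
        (∃ z : ℂ, z ≠ 0 ∧
          Polynomial.eval z p = Polynomial.eval (((starRingEnd ℂ) z)⁻¹) p ∧
          Polynomial.eval z p = ((k : ℕ) + 1 : ℂ)) ∧
        ¬ ∃ z : ℂ, ‖z‖ = 1 ∧ Polynomial.eval z p = ((k : ℕ) + 1 : ℂ)) := by
  set a : Fin N → ℂ := fun k => (((k : ℕ) : ℂ) + 2)⁻¹
  have ha : Function.Injective a := injective_inv_natCast_add_two.comp Fin.val_injective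
  have ha_norm : ∀ k, 0 < ‖a k‖ ∧ ‖a k‖ < 1 := fun k => norm_inv_natCast_add_two k
  obtain ⟨p, hp, hlarge⟩ := exists_eval_reflection_eq_forall_lt_norm_eval_of_norm_eq_one ha
    ha_norm (fun k => ((k : ℕ) + 1 : ℂ)) N
  refine ⟨a, p, ha, ha_norm, hp, hlarge, fun k => ⟨⟨a k, norm_pos_iff.1 (ha_norm k).1,
    (hp k).1.trans (hp k).2.symm, (hp k).1⟩, ?_⟩⟩
  rintro ⟨z, hz, hpz⟩
  have := hlarge z hz
  rw [hpz, ← Nat.cast_succ, Complex.norm_natCast, Nat.cast_lt] at this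
  exact this.not_ge k.isLt

/-- For each `N ≥ 1` there are distinct points `a_1, ..., a_N` in the punctured unit
disk and a polynomial `p` with `p(a_k) = p(1/conj(a_k)) = k` and `|p| > N` on the unit
circle; consequently `{1, ..., N} ⊆ p(E) \ p(𝕋)` where
`E = {z ≠ 0 : p(z) = p(1/conj z)}`. -/
theorem stmt_18 (N : ℕ) (hN : 1 ≤ N) :
    ∃ (a : Fin N → ℂ) (p : Polynomial ℂ),
      Function.Injective a ∧
      (∀ k : Fin N, 0 < ‖a k‖ ∧ ‖a k‖ < 1) ∧
      (∀ k : Fin N,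
        Polynomial.eval (a k) p = ((k : ℕ) + 1 : ℂ) ∧
        Polynomial.eval (((starRingEnd ℂ) (a k))⁻¹) p = ((k : ℕ) + 1 : ℂ)) ∧
      (∀ z : ℂ, ‖z‖ = 1 → (N : ℝ) < ‖Polynomial.eval z p‖) ∧
      (∀ k : Fin N,
        (∃ z : ℂ, z ≠ 0 ∧
          Polynomial.eval z p = Polynomial.eval (((starRingEnd ℂ) z)⁻¹) p ∧
          Polynomial.eval z p = ((k : ℕ) + 1 : ℂ)) ∧
        ¬ ∃ z : ℂ, ‖z‖ = 1 ∧ Polynomial.eval z p = ((k : ℕ) + 1 : ℂ)) :=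
  stmt_18_general N
end
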